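/- Let A be a ring, d ∈ A, and e a natural number with (0 :_A d^e) = (0 :_A d^{e+1}). If V is a flat A-algebra, then (0 :_V d) ∩ d^e V = 0. -/

import Mathlib

/-!
By the equational criterion for flatness, a relation `r • m = 0` in a flat module is a
combination of relations `r * a = 0` in the ring. Hence any `s` annihilating the annihilator
of `r` in `A` also kills every element of `V` killed by `r`. With `r = d ^ (e + 1)` and
`s = d ^ e`, an element `x = c * d ^ e` with `d * x = 0` has `d ^ (e + 1) • c = 0`,
so `x = d ^ e • c = 0`.
-/

theorem Module.Flat.smul_eq_zero_of_smul_eq_zero {R M : Type*} [CommRing R] [AddCommGroup M]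
    [Module R M] [Module.Flat R M] {r s : R} (hrs : ∀ a : R, r * a = 0 → s * a = 0) {m : M}
    (hm : r • m = 0) : s • m = 0 := by
  obtain ⟨k, a, y, hm_eq, hra⟩ :=
    Module.Flat.isTrivialRelation_of_sum_smul_eq_zero (f := fun _ : Unit => r)
      (x := fun _ => m) (by simpa using hm)
  simp only [Finset.univ_unique, Finset.sum_singleton] at hm_eq hra
  rw [hm_eq (), Finset.smul_sum]
  refine Finset.sum_eq_zero fun j _ => ?_
  rw [smul_smul, hrs _ (hra j), zero_smul]

/-- If `(0 :_A d^e) = (0 :_A d^{e+1})` and `V` is a flat `A`-algebra, then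
`(0 :_V d) ∩ d^e V = 0`. -/
theorem stmt_1 (A V : Type*) [CommRing A] [CommRing V] [Algebra A V] [Module.Flat A V]
    (d : A) (e : ℕ)
    (h : {a : A | a * d ^ e = 0} = {a : A | a * d ^ (e + 1) = 0}) :
    ∀ x : V, algebraMap A V d * x = 0 →
      x ∈ Ideal.span {algebraMap A V (d ^ e)} → x = 0 := by
  intro x hdx hx
  obtain ⟨c, rfl⟩ := Ideal.mem_span_singleton'.mp hx
  have hann : ∀ a : A, d ^ (e + 1) * a = 0 → d ^ e * a = 0 := fun a ha => by
    have : a ∈ {a : A | a * d ^ (e + 1) = 0} := by simpa [mul_comm] using ha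
    simpa [← h, mul_comm] using this
  have hc : d ^ (e + 1) • c = 0 := by
    rw [Algebra.smul_def, pow_succ', map_mul, ← hdx]
    ring
  simpa [Algebra.smul_def, mul_comm] using Module.Flat.smul_eq_zero_of_smul_eq_zero hann hc
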